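/- Bailey chain (Andrews): If (α, β) is a Bailey pair relative to a, then so is (α', β') where α'_L = ((ρ₁;q)_L (ρ₂;q)_L (aq/(ρ₁ρ₂))^L / ((aq/ρ₁;q)_L (aq/ρ₂;q)_L)) α_L and β'_L = Σ_{r=0}^L (ρ₁;q)_r (ρ₂;q)_r (aq/(ρ₁ρ₂))^r (aq/(ρ₁ρ₂);q)_{L-r} β_r / ((aq/ρ₁;q)_L (aq/ρ₂;q)_L (q;q)_{L-r}). -/

import Mathlib

/-- Finite q-shifted factorial `(x;q)_n`. -/
noncomputable def qp (q x : ℂ) (n : ℕ) : ℂ := ∏ k ∈ Finset.range n, (1 - x * q ^ k)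

/-!
Bailey's transform reduces the chain to an identity for the coefficient of `α_j` in `β'_L`:
after exchanging the triangular double sum, that coefficient is a terminating q-Pfaff–Saalschütz
sum `∑_{k ≤ n} T(n - k, k)` with `n = L - j` and `T = saalschutzTerm`. We evaluate it by the
WZ method: with the certificate `G = saalschutzCert`, the summands satisfy, for `k + m = n`, a
first-order recurrence in `n` up to the difference `G(m+1, k) - G(m, k+1)`. Summing over `k`
telescopes, so the sum satisfies the same recurrence as the closed form `saalschutzValue`, and
both agree at `n = 0`.
-/

open Finset

theorem qp_zero (q x : ℂ) : qp q x 0 = 1 := prod_range_zero _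

theorem qp_succ (q x : ℂ) (n : ℕ) : qp q x (n + 1) = qp q x n * (1 - x * q ^ n) :=
  prod_range_succ _ _

theorem qp_add (q x : ℂ) (m n : ℕ) : qp q x (m + n) = qp q x m * qp q (x * q ^ m) n := by
  simp only [qp, prod_range_add, mul_assoc, ← pow_add]

theorem one_sub_mul_pow_ne_zero {q x : ℂ} (h : ∀ n, qp q x n ≠ 0) (k : ℕ) :
    1 - x * q ^ k ≠ 0 :=
  right_ne_zero_of_mul (qp_succ q x k ▸ h (k + 1))

theorem qp_self_ne_zero {q : ℂ} (hq : ‖q‖ < 1) (n : ℕ) : qp q q n ≠ 0 := by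
  refine prod_ne_zero_iff.2 fun k _ hk => ?_
  have hpow : ‖q ^ (k + 1)‖ < 1 := by
    rw [norm_pow]
    exact pow_lt_one₀ (norm_nonneg q) hq k.succ_ne_zero
  rw [pow_succ', ← sub_eq_zero.mp hk, norm_one] at hpow
  exact hpow.false

theorem bailey_transform {R : Type*} [CommSemiring R] {α β : ℕ → R} {u v w : ℕ → ℕ → R}
    (hβ : ∀ L, β L = ∑ r ∈ range (L + 1), α r * u L r)
    (hw : ∀ L i, i ≤ L → ∑ r ∈ Icc i L, v L r * u r i = w L i) (L : ℕ) :
    ∑ r ∈ range (L + 1), v L r * β r = ∑ i ∈ range (L + 1), w L i * α i := by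
  simp only [hβ, mul_sum]
  rw [sum_comm' (t' := range (L + 1)) (s' := fun i => Icc i L)
    (fun r i => by simp only [mem_range, mem_Icc]; omega)]
  refine sum_congr rfl fun i hi => ?_
  rw [← hw L i (by simpa [Nat.lt_succ_iff] using hi), sum_mul]
  exact sum_congr rfl fun r _ => by ring

/-- The WZ recurrence divided by `T(m, k)`, with `u = q^j`, `w = q^k`, `z = q^m`. -/
theorem saalschutz_wz_identity {x y : ℂ} (hx : x ≠ 0) (hy : y ≠ 0) (q a u w z : ℂ) :
    (1 - a * q / (x * y) * z) *
        ((1 - q * w * z) * (1 - a * q * u ^ 2 * w * z) - q * z * (1 - w) * (1 - a * u ^ 2 * w)) =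
      (1 - q * z) * ((1 - a * q / x * (u * w * z)) * (1 - a * q / y * (u * w * z)) -
        a * q / (x * y) * z * (1 - x * (u * w)) * (1 - y * (u * w))) := by
  field_simp
  ring

section Saalschutz

variable (q x y a : ℂ)

noncomputable def saalschutzTerm (j m k : ℕ) : ℂ :=
  qp q x (j + k) * qp q y (j + k) * (a * q / (x * y)) ^ (j + k) * qp q (a * q / (x * y)) m /
    (qp q q m * qp q q k * qp q (a * q) (2 * j + k))

noncomputable def saalschutzCert (j m k : ℕ) : ℂ :=
  q ^ m * (1 - q ^ k) * (1 - a * q ^ (2 * j + k)) * saalschutzTerm q x y a j m k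

noncomputable def saalschutzValue (j n : ℕ) : ℂ :=
  qp q x j * qp q y j * (a * q / (x * y)) ^ j *
    qp q (a * q / x * q ^ j) n * qp q (a * q / y * q ^ j) n /
    (qp q q n * qp q (a * q) (2 * j + n))

variable {q x y a}

theorem saalschutzTerm_succ_left (hqq : ∀ n, qp q q n ≠ 0) (j m k : ℕ) :
    (1 - q * q ^ m) * saalschutzTerm q x y a j (m + 1) k =
      (1 - a * q / (x * y) * q ^ m) * saalschutzTerm q x y a j m k := by
  have := one_sub_mul_pow_ne_zero hqq m
  have := hqq m
  have := hqq k
  unfold saalschutzTerm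
  rw [qp_succ q (a * q / (x * y)) m, qp_succ q q m]
  field_simp

theorem saalschutzTerm_succ_right (hqq : ∀ n, qp q q n ≠ 0) (haq : ∀ n, qp q (a * q) n ≠ 0)
    (j m k : ℕ) :
    (1 - q * q ^ k) * (1 - a * q * q ^ (2 * j + k)) * saalschutzTerm q x y a j m (k + 1) =
      a * q / (x * y) * (1 - x * q ^ (j + k)) * (1 - y * q ^ (j + k)) *
        saalschutzTerm q x y a j m k := by
  have := one_sub_mul_pow_ne_zero hqq k
  have := one_sub_mul_pow_ne_zero haq (2 * j + k)
  have := hqq m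
  have := hqq k
  have := haq (2 * j + k)
  unfold saalschutzTerm
  rw [← add_assoc, ← add_assoc, qp_succ q x, qp_succ q y, qp_succ q q k, qp_succ q (a * q),
    pow_succ]
  generalize a * q / (x * y) = c
  rw [mul_div_assoc', mul_div_assoc', div_eq_div_iff (by simp [*]) (by simp [*])]
  ring

theorem saalschutzTerm_wz (hx : x ≠ 0) (hy : y ≠ 0) (hqq : ∀ n, qp q q n ≠ 0)
    (haq : ∀ n, qp q (a * q) n ≠ 0) (j : ℕ) {m k n : ℕ} (h : k + m = n) :
    (1 - q ^ (n + 1)) * (1 - a * q ^ (2 * j + n + 1)) * saalschutzTerm q x y a j (m + 1) k =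
      (1 - a * q / x * q ^ (j + n)) * (1 - a * q / y * q ^ (j + n)) *
          saalschutzTerm q x y a j m k +
        (saalschutzCert q x y a j (m + 1) k - saalschutzCert q x y a j m (k + 1)) := by
  subst h
  apply mul_left_cancel₀ (one_sub_mul_pow_ne_zero hqq m)
  unfold saalschutzCert
  linear_combination
    ((1 - q ^ (k + m + 1)) * (1 - a * q ^ (2 * j + k + m + 1)) -
        q ^ (m + 1) * (1 - q ^ k) * (1 - a * q ^ (2 * j + k))) *
        saalschutzTerm_succ_left (x := x) (y := y) (a := a) hqq j m k +
      (1 - q * q ^ m) * q ^ m * saalschutzTerm_succ_right (x := x) (y := y) hqq haq j m k +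
      saalschutzTerm q x y a j m k * saalschutz_wz_identity hx hy q a (q ^ j) (q ^ k) (q ^ m)

theorem sum_saalschutzTerm_succ (hx : x ≠ 0) (hy : y ≠ 0) (hqq : ∀ n, qp q q n ≠ 0)
    (haq : ∀ n, qp q (a * q) n ≠ 0) (j n : ℕ) :
    (1 - q ^ (n + 1)) * (1 - a * q ^ (2 * j + n + 1)) *
        ∑ k ∈ range (n + 2), saalschutzTerm q x y a j (n + 1 - k) k =
      (1 - a * q / x * q ^ (j + n)) * (1 - a * q / y * q ^ (j + n)) *
        ∑ k ∈ range (n + 1), saalschutzTerm q x y a j (n - k) k := by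
  have hwz : ∀ k ∈ range (n + 1),
      (1 - q ^ (n + 1)) * (1 - a * q ^ (2 * j + n + 1)) * saalschutzTerm q x y a j (n + 1 - k) k =
        (1 - a * q / x * q ^ (j + n)) * (1 - a * q / y * q ^ (j + n)) *
            saalschutzTerm q x y a j (n - k) k +
          (saalschutzCert q x y a j (n + 1 - k) k -
            saalschutzCert q x y a j (n + 1 - (k + 1)) (k + 1)) := by
    intro k hk
    have hkn : k ≤ n := Nat.lt_succ_iff.mp (mem_range.mp hk)
    rw [show n + 1 - k = n - k + 1 by omega, show n + 1 - (k + 1) = n - k by omega]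
    exact saalschutzTerm_wz hx hy hqq haq j (by omega)
  rw [sum_range_succ, mul_add, mul_sum, sum_congr rfl hwz, sum_add_distrib, ← mul_sum,
    sum_range_sub' (fun k => saalschutzCert q x y a j (n + 1 - k) k)]
  simp only [saalschutzCert, tsub_zero, pow_zero, sub_self, mul_zero, add_zero, zero_mul,
    tsub_self, one_mul, zero_sub]
  ring

theorem saalschutzValue_succ (hqq : ∀ n, qp q q n ≠ 0) (haq : ∀ n, qp q (a * q) n ≠ 0)
    (j n : ℕ) :
    (1 - q ^ (n + 1)) * (1 - a * q ^ (2 * j + n + 1)) * saalschutzValue q x y a j (n + 1) =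
      (1 - a * q / x * q ^ (j + n)) * (1 - a * q / y * q ^ (j + n)) *
        saalschutzValue q x y a j n := by
  have := one_sub_mul_pow_ne_zero hqq n
  have := one_sub_mul_pow_ne_zero haq (2 * j + n)
  have := hqq n
  have := haq (2 * j + n)
  unfold saalschutzValue
  rw [← add_assoc, qp_succ q q n, qp_succ q (a * q), qp_succ q (a * q / x * q ^ j),
    qp_succ q (a * q / y * q ^ j), ← mul_div_assoc, ← mul_div_assoc,
    div_eq_div_iff (by simp [*]) (by simp [*])]
  ring

theorem sum_saalschutzTerm (hx : x ≠ 0) (hy : y ≠ 0) (hqq : ∀ n, qp q q n ≠ 0)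
    (haq : ∀ n, qp q (a * q) n ≠ 0) (j n : ℕ) :
    ∑ k ∈ range (n + 1), saalschutzTerm q x y a j (n - k) k = saalschutzValue q x y a j n := by
  induction n with
  | zero => simp [saalschutzTerm, saalschutzValue, qp_zero]
  | succ n ih =>
    have hD : (1 - q ^ (n + 1)) * (1 - a * q ^ (2 * j + n + 1)) ≠ 0 := by
      rw [pow_succ', pow_succ', ← mul_assoc]
      exact mul_ne_zero (one_sub_mul_pow_ne_zero hqq n) (one_sub_mul_pow_ne_zero haq _)
    apply mul_left_cancel₀ hD
    rw [sum_saalschutzTerm_succ hx hy hqq haq, ih, saalschutzValue_succ hqq haq]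

end Saalschutz

section BaileyChain

variable {q x y a : ℂ}

theorem bailey_chain_inner_sum (hx : x ≠ 0) (hy : y ≠ 0) (hqq : ∀ n, qp q q n ≠ 0)
    (haq : ∀ n, qp q (a * q) n ≠ 0) (hdx : ∀ n, qp q (a * q / x) n ≠ 0)
    (hdy : ∀ n, qp q (a * q / y) n ≠ 0) {i L : ℕ} (hiL : i ≤ L) :
    ∑ r ∈ Icc i L,
        qp q x r * qp q y r * (a * q / (x * y)) ^ r * qp q (a * q / (x * y)) (L - r) /
          (qp q (a * q / x) L * qp q (a * q / y) L * qp q q (L - r)) *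
        (qp q q (r - i) * qp q (a * q) (r + i))⁻¹ =
      qp q x i * qp q y i * (a * q / (x * y)) ^ i / (qp q (a * q / x) i * qp q (a * q / y) i) *
        (qp q q (L - i) * qp q (a * q) (L + i))⁻¹ := by
  obtain ⟨n, rfl⟩ := Nat.exists_eq_add_of_le hiL
  have hterm : ∀ k ∈ range (n + 1),
      qp q x (i + k) * qp q y (i + k) * (a * q / (x * y)) ^ (i + k) *
            qp q (a * q / (x * y)) (i + n - (i + k)) /
          (qp q (a * q / x) (i + n) * qp q (a * q / y) (i + n) * qp q q (i + n - (i + k))) *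
        (qp q q (i + k - i) * qp q (a * q) (i + k + i))⁻¹ =
      saalschutzTerm q x y a i (n - k) k /
        (qp q (a * q / x) (i + n) * qp q (a * q / y) (i + n)) := by
    intro k _
    rw [show i + n - (i + k) = n - k by omega, show i + k - i = k by omega,
      show i + k + i = 2 * i + k by omega, saalschutzTerm]
    ring
  have hx' := right_ne_zero_of_mul (qp_add q (a * q / x) i n ▸ hdx (i + n))
  have hy' := right_ne_zero_of_mul (qp_add q (a * q / y) i n ▸ hdy (i + n))
  have := hdx i
  have := hdy i
  have := hqq n
  have := haq (2 * i + n)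
  rw [← Ico_add_one_right_eq_Icc, sum_Ico_eq_sum_range, show i + n + 1 - i = n + 1 by omega,
    sum_congr rfl hterm, ← sum_div, sum_saalschutzTerm hx hy hqq haq, saalschutzValue,
    qp_add q (a * q / x) i n, qp_add q (a * q / y) i n, show i + n - i = n by omega,
    show i + n + i = 2 * i + n by omega]
  generalize qp q (a * q / x * q ^ i) n = A at hx' ⊢
  generalize qp q (a * q / y * q ^ i) n = B at hy' ⊢
  field_simp

end BaileyChain

theorem bailey_chain_general (q a ρ₁ ρ₂ : ℂ) (hq1 : ‖q‖ < 1)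
    (hρ₁ : ρ₁ ≠ 0) (hρ₂ : ρ₂ ≠ 0)
    (hd₁ : ∀ n, qp q (a * q / ρ₁) n ≠ 0) (hd₂ : ∀ n, qp q (a * q / ρ₂) n ≠ 0)
    (haq : ∀ n, qp q (a * q) n ≠ 0)
    (α β : ℕ → ℂ)
    (hBP : ∀ L, β L = ∑ r ∈ Finset.range (L + 1),
      α r / (qp q q (L - r) * qp q (a * q) (L + r))) :
    ∀ L, (∑ r ∈ Finset.range (L + 1),
        qp q ρ₁ r * qp q ρ₂ r * (a * q / (ρ₁ * ρ₂)) ^ r *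
          qp q (a * q / (ρ₁ * ρ₂)) (L - r) * β r /
          (qp q (a * q / ρ₁) L * qp q (a * q / ρ₂) L * qp q q (L - r))) =
      ∑ r ∈ Finset.range (L + 1),
        (qp q ρ₁ r * qp q ρ₂ r * (a * q / (ρ₁ * ρ₂)) ^ r /
            (qp q (a * q / ρ₁) r * qp q (a * q / ρ₂) r) * α r) /
          (qp q q (L - r) * qp q (a * q) (L + r)) := by
  intro L
  have hβ : ∀ L,
      β L = ∑ r ∈ range (L + 1), α r * (qp q q (L - r) * qp q (a * q) (L + r))⁻¹ :=
    fun L => by simp only [hBP L, div_eq_mul_inv]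
  have key := bailey_transform hβ (fun L i hi =>
    bailey_chain_inner_sum hρ₁ hρ₂ (qp_self_ne_zero hq1) haq hd₁ hd₂ hi) L
  refine ((sum_congr rfl fun r _ => ?_).trans key).trans (sum_congr rfl fun r _ => ?_) <;> ring

/-- the Bailey chain (Andrews). If `(α,β)` is a Bailey pair relative to `a`,
then so is `(α',β')`. -/
theorem bailey_chain (q a ρ₁ ρ₂ : ℂ) (hq0 : 0 < ‖q‖) (hq1 : ‖q‖ < 1)
    (ha : a ≠ 0) (hρ₁ : ρ₁ ≠ 0) (hρ₂ : ρ₂ ≠ 0)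
    (hd₁ : ∀ n, qp q (a * q / ρ₁) n ≠ 0) (hd₂ : ∀ n, qp q (a * q / ρ₂) n ≠ 0)
    (haq : ∀ n, qp q (a * q) n ≠ 0)
    (α β : ℕ → ℂ)
    (hBP : ∀ L, β L = ∑ r ∈ Finset.range (L + 1),
      α r / (qp q q (L - r) * qp q (a * q) (L + r))) :
    ∀ L, (∑ r ∈ Finset.range (L + 1),
        qp q ρ₁ r * qp q ρ₂ r * (a * q / (ρ₁ * ρ₂)) ^ r *
          qp q (a * q / (ρ₁ * ρ₂)) (L - r) * β r /
          (qp q (a * q / ρ₁) L * qp q (a * q / ρ₂) L * qp q q (L - r))) =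
      ∑ r ∈ Finset.range (L + 1),
        (qp q ρ₁ r * qp q ρ₂ r * (a * q / (ρ₁ * ρ₂)) ^ r /
            (qp q (a * q / ρ₁) r * qp q (a * q / ρ₂) r) * α r) /
          (qp q q (L - r) * qp q (a * q) (L + r)) :=
  bailey_chain_general q a ρ₁ ρ₂ hq1 hρ₁ hρ₂ hd₁ hd₂ haq α β hBP
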